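/- arXiv:1309.5420 — 2 statements merged into one kernel-verified Lean document; each statement's English description precedes it below -/
import Mathlib

section
/- For each k ≥ 0, there is an isomorphism of abelian groups G_k/G_{k+1} ≅ ∏_{i=0}^{k} (J(R)^i / J(R)^{i+1}) x̄^{k−i}, i.e., the k-th graded piece of the filtered ring S = R[[x; σ, δ]] decomposes as a finite product of graded pieces of the J(R)-adic filtration of R. -/
universe u

/-- An abstract presentation of the skew power series ring `S = R[[x; σ, δ]]`:
a ring `S` whose underlying additive group is that of all formal power series
`∑ aᵢ xⁱ` with coefficients in `R` (encoded by the additive isomorphism `coeff`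
with the product `ℕ → R`), in which the multiplication satisfies
`x · r = σ(r) · x + δ(r)` and behaves as expected on coefficients for
left multiplication by scalars and by `x`, and for right multiplication by `x`. -/
structure SkewPowerSeriesRing (R : Type u) [Ring R] (σ : R →+* R) (δ : R →+ R) :
    Type (u + 1) where
  S : Type u
  [ringS : Ring S]
  /-- the canonical embedding `R → S` -/
  ι : R →+* S
  ι_injective : Function.Injective ι
  /-- the variable `x` -/
  X : S
  /-- the coefficient extraction: `S ≅ ∏_{i ≥ 0} R xⁱ` as additive groups -/
  coeff : S ≃+ (ℕ → R)
  coeff_ι : ∀ (r : R) (n : ℕ), coeff (ι r) n = if n = 0 then r else 0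
  coeff_X : ∀ n : ℕ, coeff X n = if n = 1 then 1 else 0
  coeff_ι_mul : ∀ (r : R) (f : S) (n : ℕ), coeff (ι r * f) n = r * coeff f n
  coeff_mul_X : ∀ (f : S) (n : ℕ),
    coeff (f * X) n = if n = 0 then 0 else coeff f (n - 1)
  X_mul_ι : ∀ r : R, X * ι r = ι (σ r) * X + ι (δ r)
  coeff_X_mul : ∀ (f : S) (n : ℕ),
    coeff (X * f) n = δ (coeff f n) + if n = 0 then 0 else σ (coeff f (n - 1))

attribute [instance] SkewPowerSeriesRing.ringS

variable {R : Type u} [Ring R] {σ : R →+* R} {δ : R →+ R}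

/-- The Jacobson radical `J(R)` (the Jacobson radical of the zero ideal). -/
def jacobsonRadical (R : Type u) [Ring R] : Ideal R := Ideal.jacobson (⊥ : Ideal R)

/-- The filtration `G_k = ∏_{i ≥ 0} J(R)^{k-i} xⁱ` of `S = R[[x; σ, δ]]`
(with the convention `J(R)^m = R` for `m ≤ 0`, via truncated subtraction). -/
def SkewPowerSeriesRing.G (W : SkewPowerSeriesRing R σ δ) (k : ℕ) : AddSubgroup W.S where
  carrier := {f : W.S | ∀ i : ℕ, W.coeff f i ∈ jacobsonRadical R ^ (k - i)}
  zero_mem' := by intro i; simp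
  add_mem' := by
    intro f g hf hg i
    rw [map_add]
    exact add_mem (hf i) (hg i)
  neg_mem' := by
    intro f hf i
    rw [map_neg]
    exact neg_mem (hf i)

/-- The monomial in `δ` and `σ` determined by a list of booleans
(`true` stands for a factor `δ`, `false` for a factor `σ`). -/
def monomialMap (σ δ : R → R) (l : List Bool) : R → R :=
  (l.map fun b => if b then δ else σ).foldr (· ∘ ·) id

/-- `δ` is `σ`-nilpotent with respect to the ideal `I`. -/
def SigmaNilpotent (σ δ : R → R) (I : Ideal R) : Prop :=
  ∀ n : ℕ, 1 ≤ n → ∃ m : ℕ, 1 ≤ m ∧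
    ∀ l : List Bool, m ≤ l.count true → ∀ r : R, monomialMap σ δ l r ∈ I ^ n

/-!
Sending `f ∈ G_k` to the classes of its coefficients of `x^(k-i)` modulo `J^(i+1)`,
`0 ≤ i ≤ k`, is an additive map onto `∏ J^i/J^(i+1)`: it is onto because each factor is hit
by a monomial, and its kernel is `G_(k+1)` because the condition defining `G_(k+1)` is empty on the
coefficients of `x^j`, `j > k` (there `J^0 = R`).
-/

section CoeffFiltration

variable {M A : Type*} [AddCommGroup M] [AddCommGroup A]
  (e : M ≃+ (ℕ → A)) (N : ℕ → AddSubgroup A)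

/-- `G_k`, with the powers of `J(R)` replaced by an arbitrary sequence `N` of subgroups. -/
def coeffFiltration (k : ℕ) : AddSubgroup M :=
  (AddSubgroup.pi Set.univ fun i => N (k - i)).comap e.toAddMonoidHom

variable {e N}

theorem mem_coeffFiltration {k : ℕ} {f : M} :
    f ∈ coeffFiltration e N k ↔ ∀ i, e f i ∈ N (k - i) := by
  simp [coeffFiltration, AddSubgroup.mem_pi]

theorem apply_sub_mem_of_mem_coeffFiltration {k : ℕ} {f : M}
    (hf : f ∈ coeffFiltration e N k) {i : ℕ} (hi : i ≤ k) : e f (k - i) ∈ N i := by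
  simpa [Nat.sub_sub_self hi] using mem_coeffFiltration.1 hf (k - i)

variable (e N)

def gradedCoeff (k : ℕ) :
    coeffFiltration e N k →+ ∀ i : Fin (k + 1), N i ⧸ (N (i + 1)).addSubgroupOf (N i) :=
  AddMonoidHom.pi fun i => (QuotientAddGroup.mk' _).comp <|
    ((Pi.evalAddMonoidHom _ (k - i)).comp
      (e.toAddMonoidHom.comp (coeffFiltration e N k).subtype)).codRestrict (N i)
      fun f => apply_sub_mem_of_mem_coeffFiltration f.2 (Nat.lt_succ_iff.1 i.2)

theorem gradedCoeff_apply (k : ℕ) (f : coeffFiltration e N k) (i : Fin (k + 1)) :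
    gradedCoeff e N k f i =
      QuotientAddGroup.mk ⟨e f (k - i), apply_sub_mem_of_mem_coeffFiltration f.2
        (Nat.lt_succ_iff.1 i.2)⟩ :=
  rfl

theorem ker_gradedCoeff (hN : N 0 = ⊤) (k : ℕ) :
    (gradedCoeff e N k).ker =
      (coeffFiltration e N (k + 1)).addSubgroupOf (coeffFiltration e N k) := by
  ext f
  simp only [AddMonoidHom.mem_ker, AddSubgroup.mem_addSubgroupOf, mem_coeffFiltration, funext_iff,
    gradedCoeff_apply, Pi.zero_apply, QuotientAddGroup.eq_zero_iff]
  constructor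
  · intro hf j
    rcases le_or_gt j k with hj | hj
    · simpa [Nat.sub_sub_self hj, Nat.sub_add_comm hj] using hf ⟨k - j, by omega⟩
    · simp [Nat.sub_eq_zero_of_le hj, hN]
  · intro hf i
    have hi : (i : ℕ) ≤ k := Nat.lt_succ_iff.1 i.2
    have hidx : k + 1 - (k - i) = i + 1 := by omega
    exact hidx ▸ hf (k - i)

theorem single_mem_range_gradedCoeff (k : ℕ) (i : Fin (k + 1)) (a : N i) :
    Pi.single i (QuotientAddGroup.mk a) ∈ (gradedCoeff e N k).range := by
  have hi : (i : ℕ) ≤ k := Nat.lt_succ_iff.1 i.2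
  have hmem : e.symm (Pi.single (k - i) a) ∈ coeffFiltration e N k := by
    refine mem_coeffFiltration.2 fun j => ?_
    rcases eq_or_ne j (k - i) with rfl | hj
    · simp [Nat.sub_sub_self hi]
    · simp [Pi.single_eq_of_ne hj, zero_mem]
  refine ⟨⟨_, hmem⟩, funext fun j => ?_⟩
  rcases eq_or_ne j i with rfl | hj
  · simp [gradedCoeff_apply]
  · have hkj : k - (j : ℕ) ≠ k - i := by omega
    simp only [gradedCoeff_apply, AddEquiv.apply_symm_apply, Pi.single_eq_of_ne hkj,
      Pi.single_eq_of_ne hj, QuotientAddGroup.eq_zero_iff]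
    exact zero_mem _

theorem gradedCoeff_surjective (k : ℕ) : Function.Surjective (gradedCoeff e N k) := by
  intro y
  rw [← AddMonoidHom.mem_range, ← Finset.univ_sum_single y]
  refine AddSubgroup.sum_mem _ fun i _ => ?_
  obtain ⟨a, ha⟩ := QuotientAddGroup.mk_surjective (y i)
  exact ha ▸ single_mem_range_gradedCoeff e N k i a

variable {N}

noncomputable def coeffFiltrationQuotientEquiv (hN : N 0 = ⊤) (k : ℕ) :
    (coeffFiltration e N k ⧸ (coeffFiltration e N (k + 1)).addSubgroupOf (coeffFiltration e N k))
      ≃+ ∀ i : Fin (k + 1), N i ⧸ (N (i + 1)).addSubgroupOf (N i) :=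
  (QuotientAddGroup.quotientAddEquivOfEq (ker_gradedCoeff e N hN k).symm).trans
    (QuotientAddGroup.quotientKerEquivOfSurjective _ (gradedCoeff_surjective e N k))

end CoeffFiltration

theorem SkewPowerSeriesRing.G_eq_coeffFiltration (W : SkewPowerSeriesRing R σ δ) :
    W.G = coeffFiltration W.coeff fun i => (jacobsonRadical R ^ i).toAddSubgroup :=
  funext fun _ => AddSubgroup.ext fun _ => by rw [mem_coeffFiltration]; rfl

theorem graded_piece_decomposition_general (R : Type u) [Ring R] (σ : R →+* R) (δ : R →+ R)
    (W : SkewPowerSeriesRing R σ δ)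
    (k : ℕ) :
    Nonempty
      ((W.G k ⧸ (W.G (k + 1)).addSubgroupOf (W.G k)) ≃+
        ∀ i : Fin (k + 1),
          ((jacobsonRadical R ^ (i : ℕ)).toAddSubgroup ⧸
            ((jacobsonRadical R ^ ((i : ℕ) + 1)).toAddSubgroup.addSubgroupOf
              (jacobsonRadical R ^ (i : ℕ)).toAddSubgroup))) := by
  rw [W.G_eq_coeffFiltration]
  exact ⟨coeffFiltrationQuotientEquiv W.coeff (by simp) k⟩

/-- for each `k ≥ 0` there is an isomorphism of abelian groups
`G_k/G_{k+1} ≅ ∏_{i=0}^{k} (J(R)^i / J(R)^{i+1}) x̄^{k-i}`. -/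
theorem graded_piece_decomposition (R : Type u) [Ring R] (σ : R →+* R) (δ : R →+ R)
    (W : SkewPowerSeriesRing R σ δ)
    (hσbij : Function.Bijective σ)
    (hσJ : σ '' (jacobsonRadical R : Set R) = (jacobsonRadical R : Set R))
    (hδ : ∀ a b : R, δ (a * b) = σ a * δ b + δ a * b)
    (hδnil : SigmaNilpotent (σ : R → R) (δ : R → R) (jacobsonRadical R))
    (hδR : ∀ r : R, δ r ∈ jacobsonRadical R)
    (k : ℕ) :
    Nonempty
      ((W.G k ⧸ (W.G (k + 1)).addSubgroupOf (W.G k)) ≃+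
        ∀ i : Fin (k + 1),
          ((jacobsonRadical R ^ (i : ℕ)).toAddSubgroup ⧸
            ((jacobsonRadical R ^ ((i : ℕ) + 1)).toAddSubgroup.addSubgroupOf
              (jacobsonRadical R ^ (i : ℕ)).toAddSubgroup))) :=
  graded_piece_decomposition_general R σ δ W k
end

section
/- If R is a filtered ring whose associated graded ring Gr(R) is left Noetherian, and the filtration is complete, then R is left Noetherian. -/
/-!
Given a left ideal `I` of `R`, the principal symbols of its elements span a left ideal of
`Gr(R)`, which is finitely generated by symbols `σ(x₁), …, σ(xₙ)` with `xᵢ ∈ I ∩ F dᵢ`.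
Comparing homogeneous components in `Gr(R)`, every `y ∈ I ∩ F k` can be corrected by some
`∑ aᵢ xᵢ` with `aᵢ ∈ F (k - dᵢ)` so that the remainder lies in `I ∩ F (k + 1)`. Iterating,
completeness sums the coefficient series to `Lᵢ`, and `y - ∑ Lᵢ xᵢ` lies in every `F n`, hence
vanishes by separatedness: `I` is generated by the `xᵢ`.
-/

universe u

/-- A bundled finitely generated projective left module over `R`. -/
structure FGProj (R : Type u) [Ring R] : Type (u + 1) where
  carrier : Type u
  [isAddCommGroup : AddCommGroup carrier]
  [isModule : Module R carrier]
  [isFinite : Module.Finite R carrier]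
  [isProjective : Module.Projective R carrier]

attribute [instance] FGProj.isAddCommGroup FGProj.isModule FGProj.isFinite FGProj.isProjective

/-- `A` is left regular: every finitely generated left `A`-module admits a finite
resolution by finitely generated projective left `A`-modules. -/
def IsLeftRegularRing (A : Type u) [Ring A] : Prop :=
  ∀ (M : Type u) [AddCommGroup M] [Module A M] [Module.Finite A M],
    ∃ (n : ℕ) (P : ℕ → FGProj A) (d : ∀ i : ℕ, (P (i + 1)).carrier →ₗ[A] (P i).carrier)
      (ε : (P 0).carrier →ₗ[A] M),
      (∀ i, n < i → Subsingleton (P i).carrier) ∧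
      Function.Surjective ε ∧ Function.Exact (d 0) ε ∧
      ∀ i : ℕ, Function.Exact (d (i + 1)) (d i)

/-- `B` is (a realization of) the associated graded ring `Gr(R) = ⊕ₖ F k / F (k+1)` of the
decreasingly filtered ring `R`: the maps `π k : F k → B` are the principal-symbol maps onto
the homogeneous components, with kernel `F (k+1)`, multiplicative in the graded sense,
jointly spanning `B`, and with independent images. -/
structure IsAssociatedGraded (R : Type u) [Ring R] (F : ℕ → AddSubgroup R)
    (B : Type u) [Ring B] where
  π : ∀ k : ℕ, F k →+ B
  π_ker : ∀ (k : ℕ) (x : F k), π k x = 0 ↔ (x : R) ∈ F (k + 1)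
  π_one : ∀ h : (1 : R) ∈ F 0, π 0 ⟨1, h⟩ = 1
  π_mul : ∀ (k l : ℕ) (x : F k) (y : F l) (h : (x : R) * (y : R) ∈ F (k + l)),
    π k x * π l y = π (k + l) ⟨(x : R) * (y : R), h⟩
  indep : ∀ (n : ℕ) (f : ∀ k : ℕ, F k),
    (∑ k ∈ Finset.range n, π k (f k)) = 0 → ∀ k < n, π k (f k) = 0
  span : AddSubgroup.closure (⋃ k : ℕ, Set.range (π k)) = (⊤ : AddSubgroup B)

open DirectSum in
theorem GradedRing.exists_homogeneous_coeffs_of_mem_span {A σ ι : Type*} [Ring A] [SetLike σ A]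
    [AddSubgroupClass σ A] (𝒜 : ℕ → σ) [GradedRing 𝒜] [Fintype ι] {x : ι → A} {d : ι → ℕ}
    (hx : ∀ i, x i ∈ 𝒜 (d i)) {k : ℕ} {y : A} (hy : y ∈ 𝒜 k)
    (hspan : y ∈ Submodule.span A (Set.range x)) :
    ∃ c : ι → A, (∀ i, c i ∈ 𝒜 (k - d i)) ∧ (∀ i, k < d i → c i = 0) ∧ y = ∑ i, c i * x i := by
  classical
  obtain ⟨b, rfl⟩ := (Submodule.mem_span_range_iff_exists_fun A).1 hspan
  refine ⟨fun i => if d i ≤ k then decompose 𝒜 (b i) (k - d i) else 0, fun i => ?_,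
    fun i hi => if_neg (not_le.2 hi), ?_⟩
  · dsimp only
    split_ifs
    · exact SetLike.coe_mem _
    · exact zero_mem _
  · conv_lhs => rw [← decompose_of_mem_same 𝒜 hy, ← GradedRing.proj_apply, map_sum]
    refine Finset.sum_congr rfl fun i _ => ?_
    rw [smul_eq_mul, GradedRing.proj_apply, coe_decompose_mul_of_right_mem 𝒜 k (hx i), ite_mul,
      zero_mul]

namespace IsAssociatedGraded

variable {R B : Type u} [Ring R] [Ring B] {F : ℕ → AddSubgroup R} (gr : IsAssociatedGraded R F B)

def piece (k : ℕ) : AddSubgroup B := (gr.π k).range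

open Classical in
/-- A total version of `π k` (zero off `F k`): with it, degrees such as `k - d + d` and `k`
can be rewritten into each other without dependent-type casts. -/
noncomputable def symbol (k : ℕ) (r : R) : B := if h : r ∈ F k then gr.π k ⟨r, h⟩ else 0

variable {gr}

theorem symbol_of_mem {k : ℕ} {r : R} (h : r ∈ F k) : gr.symbol k r = gr.π k ⟨r, h⟩ :=
  dif_pos h

theorem symbol_zero (k : ℕ) : gr.symbol k 0 = 0 := by
  rw [symbol_of_mem (zero_mem _)]
  exact map_zero _

theorem symbol_sub {k : ℕ} {r s : R} (hr : r ∈ F k) (hs : s ∈ F k) :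
    gr.symbol k (r - s) = gr.symbol k r - gr.symbol k s := by
  rw [symbol_of_mem hr, symbol_of_mem hs, symbol_of_mem (sub_mem hr hs), ← map_sub]
  rfl

theorem symbol_sum {ι : Type*} {s : Finset ι} {k : ℕ} {r : ι → R} (hr : ∀ i ∈ s, r i ∈ F k) :
    gr.symbol k (∑ i ∈ s, r i) = ∑ i ∈ s, gr.symbol k (r i) := by
  have hsum : (⟨∑ i ∈ s, r i, sum_mem hr⟩ : F k) = ∑ i ∈ s.attach, ⟨r i, hr i i.2⟩ := by
    ext
    simp [Finset.sum_attach s r]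
  rw [symbol_of_mem (sum_mem hr), hsum, map_sum, ← Finset.sum_attach s]
  exact Finset.sum_congr rfl fun i _ => (symbol_of_mem _).symm

theorem symbol_eq_zero_iff {k : ℕ} {r : R} (h : r ∈ F k) :
    gr.symbol k r = 0 ↔ r ∈ F (k + 1) := by
  rw [symbol_of_mem h]
  exact gr.π_ker k ⟨r, h⟩

theorem symbol_mul {k l : ℕ} {r s : R} (hr : r ∈ F k) (hs : s ∈ F l) (hrs : r * s ∈ F (k + l)) :
    gr.symbol k r * gr.symbol l s = gr.symbol (k + l) (r * s) := by
  rw [symbol_of_mem hr, symbol_of_mem hs, symbol_of_mem hrs]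
  exact gr.π_mul k l ⟨r, hr⟩ ⟨s, hs⟩ hrs

theorem symbol_mem_piece (k : ℕ) (r : R) : gr.symbol k r ∈ gr.piece k := by
  by_cases h : r ∈ F k
  · exact ⟨⟨r, h⟩, (symbol_of_mem h).symm⟩
  · rw [symbol, dif_neg h]
    exact zero_mem _

theorem exists_symbol_eq_of_mem_piece {k : ℕ} {b : B} (hb : b ∈ gr.piece k) :
    ∃ r ∈ F k, gr.symbol k r = b := by
  obtain ⟨r, rfl⟩ := hb
  exact ⟨r, r.2, symbol_of_mem r.2⟩

variable (gr)

theorem isInternal_piece : DirectSum.IsInternal gr.piece := by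
  classical
  refine ⟨(injective_iff_map_eq_zero _).2 fun f hf => ?_, fun b => ?_⟩
  · choose g hg using fun k => (f k).2
    set n := f.support.sup id + 1
    have hsupp : f.support ⊆ Finset.range n := fun k hk =>
      Finset.mem_range.2 (Nat.lt_succ_of_le (Finset.le_sup (f := id) hk))
    have hsum : ∑ k ∈ Finset.range n, gr.π k (g k) = 0 := by
      rw [← hf, DirectSum.coeAddMonoidHom_eq_dfinsuppSum, DFinsupp.sum,
        Finset.sum_subset hsupp fun k _ hk => by simp [DFinsupp.notMem_support_iff.1 hk]]
      exact Finset.sum_congr rfl fun k _ => hg k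
    ext k
    by_cases hk : k < n
    · simpa [hg] using gr.indep n g hsum k hk
    · exact congrArg Subtype.val
        (DFinsupp.notMem_support_iff.1 fun h => hk (Finset.mem_range.1 (hsupp h)))
  · have hle : AddSubgroup.closure (⋃ k, Set.range (gr.π k)) ≤
        (DirectSum.coeAddMonoidHom gr.piece).range := by
      refine AddSubgroup.closure_le _ |>.2 fun _ hb => ?_
      obtain ⟨k, r, rfl⟩ := Set.mem_iUnion.1 hb
      exact ⟨DirectSum.of (fun k => gr.piece k) k ⟨_, r, rfl⟩, DirectSum.coeAddMonoidHom_of _ _ _⟩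
    rw [gr.span, top_le_iff, AddMonoidHom.range_eq_top] at hle
    exact hle b

theorem gradedMonoid_piece (h1 : (1 : R) ∈ F 0)
    (hmul : ∀ (k l : ℕ) (x y : R), x ∈ F k → y ∈ F l → x * y ∈ F (k + l)) :
    SetLike.GradedMonoid gr.piece where
  one_mem := ⟨⟨1, h1⟩, gr.π_one h1⟩
  mul_mem := by
    rintro k l _ _ ⟨x, rfl⟩ ⟨y, rfl⟩
    exact ⟨_, (gr.π_mul k l x y (hmul k l x y x.2 y.2)).symm⟩

noncomputable abbrev gradedRing (h1 : (1 : R) ∈ F 0)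
    (hmul : ∀ (k l : ℕ) (x y : R), x ∈ F k → y ∈ F l → x * y ∈ F (k + l)) :
    GradedRing gr.piece :=
  { gr.gradedMonoid_piece h1 hmul, gr.isInternal_piece.chooseDecomposition with }

variable {gr}

theorem exists_sub_sum_mul_mem_succ (h1 : (1 : R) ∈ F 0)
    (hmul : ∀ (k l : ℕ) (x y : R), x ∈ F k → y ∈ F l → x * y ∈ F (k + l))
    {ι : Type*} [Fintype ι] {d : ι → ℕ} {x : ι → R} (hx : ∀ i, x i ∈ F (d i)) {k : ℕ} {y : R}
    (hy : y ∈ F k)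
    (hspan : gr.symbol k y ∈ Submodule.span B (Set.range fun i => gr.symbol (d i) (x i))) :
    ∃ a : ι → R, (∀ i, a i ∈ F (k - d i)) ∧ y - ∑ i, a i * x i ∈ F (k + 1) := by
  let := gr.gradedRing h1 hmul
  obtain ⟨c, hc, hc_zero, hyc⟩ := GradedRing.exists_homogeneous_coeffs_of_mem_span gr.piece
    (fun i => symbol_mem_piece (d i) (x i)) (symbol_mem_piece k y) hspan
  have hlift : ∀ i, ∃ a ∈ F (k - d i),
      a * x i ∈ F k ∧ gr.symbol k (a * x i) = c i * gr.symbol (d i) (x i) := by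
    intro i
    by_cases hi : d i ≤ k
    · obtain ⟨a, ha, hac⟩ := exists_symbol_eq_of_mem_piece (hc i)
      have hax := hmul _ _ _ _ ha (hx i)
      rw [Nat.sub_add_cancel hi] at hax
      refine ⟨a, ha, hax, ?_⟩
      rw [← hac, symbol_mul ha (hx i) (by rwa [Nat.sub_add_cancel hi]), Nat.sub_add_cancel hi]
    · refine ⟨0, zero_mem _, by rw [zero_mul]; exact zero_mem _, ?_⟩
      rw [hc_zero i (not_le.1 hi), zero_mul, zero_mul, symbol_zero]
  choose a ha hax hsymbol using hlift
  have hsum : ∑ i, a i * x i ∈ F k := sum_mem fun i _ => hax i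
  refine ⟨a, ha, (symbol_eq_zero_iff (gr := gr) (sub_mem hy hsum)).1 ?_⟩
  rw [symbol_sub hy hsum, symbol_sum fun i _ => hax i, hyc]
  simp only [hsymbol, sub_self]

variable (gr)

theorem exists_symbol_generators (hB : IsNoetherianRing B) (I : Ideal R) :
    ∃ (ι : Type u) (_ : Fintype ι) (d : ι → ℕ) (x : ι → R),
      (∀ i, x i ∈ F (d i)) ∧ (∀ i, x i ∈ I) ∧ ∀ k, ∀ y ∈ I, y ∈ F k →
        gr.symbol k y ∈ Submodule.span B (Set.range fun i => gr.symbol (d i) (x i)) := by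
  set S : Set B := {b | ∃ k, ∃ y ∈ I, y ∈ F k ∧ gr.symbol k y = b}
  obtain ⟨t, htS, hspan⟩ :=
    (Submodule.fg_span_iff_fg_span_finset_subset S).1 (IsNoetherian.noetherian (Submodule.span B S))
  choose d x hxI hxF hx using fun b : t => htS b.2
  refine ⟨t, inferInstance, d, x, hxF, hxI, fun k y hyI hy => ?_⟩
  have hrange : (Set.range fun b : t => gr.symbol (d b) (x b)) = t := by
    ext b
    simp only [hx, Set.mem_range, Subtype.exists, exists_prop, exists_eq_right, Finset.mem_coe]
  rw [hrange, ← hspan]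
  exact Submodule.subset_span ⟨k, y, hyI, hy, rfl⟩

end IsAssociatedGraded

section Filtration

variable {R : Type u} [Ring R] {F : ℕ → AddSubgroup R}

theorem exists_sub_sum_range_mem_of_complete (hF0 : F 0 = ⊤)
    (hcomplete : ∀ c : ℕ → R, (∀ k : ℕ, c (k + 1) - c k ∈ F k) →
      ∃ x : R, ∀ k : ℕ, x - c k ∈ F k)
    {c : ℕ → R} {d : ℕ} (hc : ∀ k, c k ∈ F (k - d)) :
    ∃ L : R, ∀ n, L - ∑ k ∈ Finset.range n, c k ∈ F (n - d) := by
  obtain ⟨L, hL⟩ := hcomplete (fun m => ∑ k ∈ Finset.range (m + d), c k) fun m => by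
    rw [Nat.add_right_comm, Finset.sum_range_succ, add_sub_cancel_left]
    simpa using hc (m + d)
  refine ⟨L, fun n => ?_⟩
  rcases le_or_gt d n with hdn | hnd
  · obtain ⟨m, rfl⟩ := Nat.exists_eq_add_of_le' hdn
    simpa using hL m
  · rw [Nat.sub_eq_zero_of_le hnd.le, hF0]
    exact AddSubgroup.mem_top _

theorem exists_seq_sub_sum_mem_of_approx (I : Ideal R) {ι : Type*} [Fintype ι] {d : ι → ℕ}
    {x : ι → R} (hxI : ∀ i, x i ∈ I)
    (happrox : ∀ k, ∀ y ∈ I, y ∈ F k →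
      ∃ a : ι → R, (∀ i, a i ∈ F (k - d i)) ∧ y - ∑ i, a i * x i ∈ F (k + 1))
    {y : R} (hyI : y ∈ I) (hy : y ∈ F 0) :
    ∃ a : ℕ → ι → R, (∀ k i, a k i ∈ F (k - d i)) ∧
      ∀ n, y - ∑ k ∈ Finset.range n, ∑ i, a k i * x i ∈ F n := by
  choose! A hA hAF using happrox
  let Y : ℕ → R := fun n => Nat.rec y (fun k z => z - ∑ i, A k z i * x i) n
  have hY : ∀ n, Y n ∈ I ∧ Y n ∈ F n := by
    intro n
    induction n with
    | zero => exact ⟨hyI, hy⟩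
    | succ n ih =>
      exact ⟨I.sub_mem ih.1 (I.sum_mem fun i _ => I.mul_mem_left _ (hxI i)), hAF n _ ih.1 ih.2⟩
  have htelescope : ∀ n, y - ∑ k ∈ Finset.range n, ∑ i, A k (Y k) i * x i = Y n := by
    intro n
    induction n with
    | zero => simp [Y]
    | succ n ih =>
      rw [Finset.sum_range_succ, ← sub_sub, ih]
  exact ⟨fun k => A k (Y k), fun k => hA k _ (hY k).1 (hY k).2,
    fun n => htelescope n ▸ (hY n).2⟩

theorem Ideal.eq_span_of_approx (hF0 : F 0 = ⊤) (hdec : ∀ k : ℕ, F (k + 1) ≤ F k)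
    (hmul : ∀ (k l : ℕ) (x y : R), x ∈ F k → y ∈ F l → x * y ∈ F (k + l))
    (hsep : ∀ r : R, (∀ k : ℕ, r ∈ F k) → r = 0)
    (hcomplete : ∀ c : ℕ → R, (∀ k : ℕ, c (k + 1) - c k ∈ F k) →
      ∃ x : R, ∀ k : ℕ, x - c k ∈ F k)
    (I : Ideal R) {ι : Type*} [Fintype ι] {d : ι → ℕ} {x : ι → R} (hxF : ∀ i, x i ∈ F (d i))
    (hxI : ∀ i, x i ∈ I)
    (happrox : ∀ k, ∀ y ∈ I, y ∈ F k →
      ∃ a : ι → R, (∀ i, a i ∈ F (k - d i)) ∧ y - ∑ i, a i * x i ∈ F (k + 1)) :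
    I = Ideal.span (Set.range x) := by
  refine le_antisymm (fun y hyI => ?_) (Ideal.span_le.2 (Set.range_subset_iff.2 hxI))
  obtain ⟨a, ha, hrem⟩ :=
    exists_seq_sub_sum_mem_of_approx I hxI happrox hyI (hF0 ▸ AddSubgroup.mem_top y)
  choose L hL using fun i => exists_sub_sum_range_mem_of_complete hF0 hcomplete (ha · i)
  have hy : y = ∑ i, L i * x i := by
    refine (sub_eq_zero.1 (hsep _ fun n => ?_))
    have hsplit : y - ∑ i, L i * x i = (y - ∑ k ∈ Finset.range n, ∑ i, a k i * x i) -
        ∑ i, (L i - ∑ k ∈ Finset.range n, a k i) * x i := by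
      simp only [sub_mul, Finset.sum_sub_distrib, Finset.sum_mul]
      rw [Finset.sum_comm]
      abel
    rw [hsplit]
    refine sub_mem (hrem n) (AddSubgroup.sum_mem _ fun i _ => ?_)
    -- `n - d i + d i` is `max n (d i)`, so the product lies in `F n` even when `n < d i`
    exact antitone_nat_of_succ_le hdec (by omega) (hmul _ _ _ _ (hL i n) (hxF i))
  rw [hy]
  exact Ideal.sum_mem _ fun i _ => Ideal.mul_mem_left _ _ (Ideal.subset_span (Set.mem_range_self i))

end Filtration

/-- a complete (decreasing, exhaustive, separated) filtered ring whose
associated graded ring is left Noetherian is left Noetherian. -/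
theorem noetherian_of_graded_noetherian (R : Type u) [Ring R] (F : ℕ → AddSubgroup R)
    (hF0 : F 0 = ⊤) (hdec : ∀ k : ℕ, F (k + 1) ≤ F k)
    (hmul : ∀ (k l : ℕ) (x y : R), x ∈ F k → y ∈ F l → x * y ∈ F (k + l))
    (hsep : ∀ r : R, (∀ k : ℕ, r ∈ F k) → r = 0)
    (hcomplete : ∀ c : ℕ → R, (∀ k : ℕ, c (k + 1) - c k ∈ F k) →
      ∃ x : R, ∀ k : ℕ, x - c k ∈ F k)
    (B : Type u) [Ring B] (gr : IsAssociatedGraded R F B)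
    (hB : IsNoetherianRing B) :
    IsNoetherianRing R := by
  rw [isNoetherianRing_iff_ideal_fg]
  intro I
  obtain ⟨ι, _, d, x, hxF, hxI, hsymbol⟩ := gr.exists_symbol_generators hB I
  have h1 : (1 : R) ∈ F 0 := hF0 ▸ AddSubgroup.mem_top 1
  rw [Ideal.eq_span_of_approx hF0 hdec hmul hsep hcomplete I hxF hxI fun k y hyI hy =>
    IsAssociatedGraded.exists_sub_sum_mul_mem_succ h1 hmul hxF hy (hsymbol k y hyI hy)]
  exact Submodule.fg_span (Set.finite_range x)
end
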